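/- Let M := I − αL⁺ + βL⁻ (this is the expected one-step update matrix E[W(k)], so that E[x(k)] = Mᵏx⁰). Suppose that either p_ii ≥ 1/2 for all i ∈ V, or P is doubly stochastic and n ≥ 4. Then: (i) if λ_max(M − U) < 1, then for every x⁰ ∈ ℝⁿ and all i, j ∈ V, (Mᵏx⁰)_i − (Mᵏx⁰)_j → 0 as k → ∞ (belief convergence in expectation); (ii) if λ_max(M − U) > 1, then for every x⁰ ∈ ℝⁿ such that (I − U)x⁰ is not orthogonal to the eigenspace of M − U associated with its largest eigenvalue, limsup_{k→∞} max_{i,j∈V} |(Mᵏx⁰)_i − (Mᵏx⁰)_j| = ∞ (belief divergence in expectation). -/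

import Mathlib

open Matrix MeasureTheory Filter
open scoped ENNReal

noncomputable section

namespace SignedOpinion

/-- The vector `e i - e j` in `ℝⁿ`. -/
def esub {n : ℕ} (i j : Fin n) : Fin n → ℝ :=
  fun k => (if k = i then (1 : ℝ) else 0) - (if k = j then (1 : ℝ) else 0)

/-- The rank-one matrix `(e i - e j) (e i - e j)ᵀ`. -/
def dmatAux {n : ℕ} (i j : Fin n) : Matrix (Fin n) (Fin n) ℝ :=
  Matrix.vecMulVec (esub i j) (esub i j)

lemma dmatAux_symm {n : ℕ} (i j : Fin n) : dmatAux i j = dmatAux j i := by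
  ext a b
  simp only [dmatAux, esub, Matrix.vecMulVec_apply]
  ring

/-- `(e i - e j)(e i - e j)ᵀ` as a function of the unordered pair `{i, j}`. -/
def dmat {n : ℕ} : Sym2 (Fin n) → Matrix (Fin n) (Fin n) ℝ :=
  Sym2.lift ⟨dmatAux, dmatAux_symm⟩

/-- The averaging matrix `U = 𝟙𝟙ᵀ / n`. -/
def Umat (n : ℕ) : Matrix (Fin n) (Fin n) ℝ :=
  (n : ℝ)⁻¹ • Matrix.of (fun _ _ => (1 : ℝ))

/-- The positive update matrix `W⁺_{ij} = I - α (e i - e j)(e i - e j)ᵀ`. -/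
def Wpos {n : ℕ} (α : ℝ) (e : Sym2 (Fin n)) : Matrix (Fin n) (Fin n) ℝ :=
  1 - α • dmat e

/-- The negative update matrix `W⁻_{ij} = I + β (e i - e j)(e i - e j)ᵀ`. -/
def Wneg {n : ℕ} (β : ℝ) (e : Sym2 (Fin n)) : Matrix (Fin n) (Fin n) ℝ :=
  1 + β • dmat e

/-- The edge selection probability `μ({i,j}) = (p i j + p j i) / n`. -/
def edgeWeight {n : ℕ} (P : Matrix (Fin n) (Fin n) ℝ) : Sym2 (Fin n) → ℝ :=
  Sym2.lift ⟨fun i j => (P i j + P j i) / n, fun i j => by show (P i j + P j i) / n = (P j i + P i j) / n; rw [add_comm (P i j)]⟩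

/-- The weighted Laplacian of the graph on `Fin n` with edge set `Es`,
with weight `edgeWeight P e` on the edge `e`. -/
def lap {n : ℕ} (P : Matrix (Fin n) (Fin n) ℝ) (Es : Finset (Sym2 (Fin n))) :
    Matrix (Fin n) (Fin n) ℝ :=
  ∑ e ∈ Es, edgeWeight P e • dmat e

/-- The unit-weight (standard) Laplacian of the graph with edge set `Es`. -/
def lapStd {n : ℕ} (Es : Finset (Sym2 (Fin n))) : Matrix (Fin n) (Fin n) ℝ :=
  ∑ e ∈ Es, dmat e

/-- Largest (real) eigenvalue of a matrix. For a real symmetric matrix this is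
`λ_max`. -/
def lamMax {n : ℕ} (M : Matrix (Fin n) (Fin n) ℝ) : ℝ :=
  sSup {t : ℝ | ∃ v : Fin n → ℝ, v ≠ 0 ∧ M *ᵥ v = t • v}

/-- Smallest (real) eigenvalue of a matrix. -/
def lamMin {n : ℕ} (M : Matrix (Fin n) (Fin n) ℝ) : ℝ :=
  sInf {t : ℝ | ∃ v : Fin n → ℝ, v ≠ 0 ∧ M *ᵥ v = t • v}

/-- Second smallest eigenvalue of a (connected-graph) Laplacian: the smallest
eigenvalue attained by an eigenvector orthogonal to the all-ones vector. -/
def lam2 {n : ℕ} (M : Matrix (Fin n) (Fin n) ℝ) : ℝ :=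
  sInf {t : ℝ | ∃ v : Fin n → ℝ, v ≠ 0 ∧ (∑ i, v i = 0) ∧ M *ᵥ v = t • v}

/-- `P` is row-stochastic. -/
def RowStochastic {n : ℕ} (P : Matrix (Fin n) (Fin n) ℝ) : Prop :=
  (∀ i j, 0 ≤ P i j) ∧ ∀ i, ∑ j, P i j = 1

/-- `P` complies with the graph with edge set `E`. -/
def Complies {n : ℕ} (P : Matrix (Fin n) (Fin n) ℝ) (E : Finset (Sym2 (Fin n))) : Prop :=
  ∀ i j : Fin n, i ≠ j → 0 < P i j → s(i, j) ∈ E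

/-- The simple graph on `Fin n` with edge set `E`. -/
def graphOf {n : ℕ} (E : Finset (Sym2 (Fin n))) : SimpleGraph (Fin n) :=
  SimpleGraph.fromEdgeSet (↑E)

/-- `diam x = max_i x i - min_i x i`  (the quantity `𝔛` of the paper). -/
def diam {n : ℕ} (x : Fin n → ℝ) : ℝ := (⨆ i, x i) - ⨅ i, x i

/-- Selection alphabet `E ∪ {∗}` : an unordered node pair, or no selection. -/
abbrev Sel (n : ℕ) := Option (Sym2 (Fin n))

instance (n : ℕ) : MeasurableSpace (Sel n) := ⊤

/-- The update matrix triggered by a selection. -/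
def Wsel {n : ℕ} (α β : ℝ) (Epst Eneg : Finset (Sym2 (Fin n))) :
    Sel n → Matrix (Fin n) (Fin n) ℝ
  | none => 1
  | some e => if e ∈ Epst then Wpos α e else if e ∈ Eneg then Wneg β e else 1

/-- The belief process `x(k)` driven by the selection sequence `ω`. -/
def xproc {n : ℕ} (α β : ℝ) (Epst Eneg : Finset (Sym2 (Fin n))) (x0 : Fin n → ℝ)
    (ω : ℕ → Sel n) : ℕ → Fin n → ℝ
  | 0 => x0
  | k + 1 => Wsel α β Epst Eneg (ω k) *ᵥ xproc α β Epst Eneg x0 ω k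

/-- The matrix product `W(k) W(k-1) ⋯ W(0)`. -/
def Wprod {n : ℕ} (α β : ℝ) (Epst Eneg : Finset (Sym2 (Fin n))) (ω : ℕ → Sel n) :
    ℕ → Matrix (Fin n) (Fin n) ℝ
  | 0 => Wsel α β Epst Eneg (ω 0)
  | k + 1 => Wsel α β Epst Eneg (ω (k + 1)) * Wprod α β Epst Eneg ω k

/-- The one-step selection distribution `μ` on `E ∪ {∗}`. -/
def seldist {n : ℕ} (P : Matrix (Fin n) (Fin n) ℝ) (E : Finset (Sym2 (Fin n))) :
    Sel n → ℝ≥0∞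
  | none => ENNReal.ofReal (1 - ∑ e ∈ E, edgeWeight P e)
  | some e => if e ∈ E then ENNReal.ofReal (edgeWeight P e) else 0

/-- `ℙ` is the infinite product of `seldist P E`: the coordinates are i.i.d.
with per-coordinate distribution `seldist P E` (characterized on cylinders). -/
def IsIIDSel {n : ℕ} (ℙ : Measure (ℕ → Sel n)) (P : Matrix (Fin n) (Fin n) ℝ)
    (E : Finset (Sym2 (Fin n))) : Prop :=
  ∀ (K : Finset ℕ) (v : ℕ → Sel n),
    ℙ {ω | ∀ k ∈ K, ω k = v k} = ∏ k ∈ K, seldist P E (v k)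

/-- Selection alphabet for the asymmetric constrained model:
an ordered node pair (or `∗`), together with a tag in `{1,2,3}`. -/
abbrev Sel2 (n : ℕ) := Option (Fin n × Fin n) × Fin 3

instance (n : ℕ) : MeasurableSpace (Sel2 n) := ⊤

/-- weights `a, b, c` on the tags. -/
def wabc (a b c : ℝ) : Fin 3 → ℝ := ![a, b, c]

/-- Per-step distribution for the asymmetric constrained model: the pair
`({i,j}, t)` (represented by its ordered representative with `i < j`) has mass
`(wabc a b c t) · μ({i,j})`, and `(∗, t)` has mass `(wabc a b c t) · μ(∗)`. -/
def seldist2 {n : ℕ} (P : Matrix (Fin n) (Fin n) ℝ) (E : Finset (Sym2 (Fin n)))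
    (a b c : ℝ) : Sel2 n → ℝ≥0∞
  | (none, t) => ENNReal.ofReal (wabc a b c t) * ENNReal.ofReal (1 - ∑ e ∈ E, edgeWeight P e)
  | (some (i, j), t) =>
      if i < j ∧ s(i, j) ∈ E then
        ENNReal.ofReal (wabc a b c t) * ENNReal.ofReal (edgeWeight P s(i, j))
      else 0

/-- `ℙ` is the infinite product of `seldist2 P E a b c`. -/
def IsIIDSel2 {n : ℕ} (ℙ : Measure (ℕ → Sel2 n)) (P : Matrix (Fin n) (Fin n) ℝ)
    (E : Finset (Sym2 (Fin n))) (a b c : ℝ) : Prop :=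
  ∀ (K : Finset ℕ) (v : ℕ → Sel2 n),
    ℙ {ω | ∀ k ∈ K, ω k = v k} = ∏ k ∈ K, seldist2 P E a b c (v k)

/-- Projection onto `[-A, A]`. -/
def projA (A z : ℝ) : ℝ := max (-A) (min A z)

/-- `θ(e) = α` on positive edges, `-β` on negative edges. -/
def theta {n : ℕ} (α β : ℝ) (Epst Eneg : Finset (Sym2 (Fin n))) (e : Sym2 (Fin n)) : ℝ :=
  if e ∈ Epst then α else if e ∈ Eneg then -β else 0

/-- One step of the asymmetric constrained update. -/
def cstep {n : ℕ} (α β A : ℝ) (Epst Eneg : Finset (Sym2 (Fin n))) :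
    Sel2 n → (Fin n → ℝ) → (Fin n → ℝ)
  | (none, _), x => x
  | (some (i, j), t), x =>
      if t = 0 then
        Function.update x i
          (projA A ((1 - theta α β Epst Eneg s(i, j)) * x i + theta α β Epst Eneg s(i, j) * x j))
      else if t = 1 then
        Function.update x j
          (projA A ((1 - theta α β Epst Eneg s(i, j)) * x j + theta α β Epst Eneg s(i, j) * x i))
      else
        Function.update
          (Function.update x i
            (projA A ((1 - theta α β Epst Eneg s(i, j)) * x i + theta α β Epst Eneg s(i, j) * x j)))
          j
          (projA A ((1 - theta α β Epst Eneg s(i, j)) * x j + theta α β Epst Eneg s(i, j) * x i))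

/-- The constrained asymmetric belief process. -/
def cproc {n : ℕ} (α β A : ℝ) (Epst Eneg : Finset (Sym2 (Fin n))) (x0 : Fin n → ℝ)
    (ω : ℕ → Sel2 n) : ℕ → Fin n → ℝ
  | 0 => x0
  | k + 1 => cstep α β A Epst Eneg (ω k) (cproc α β A Epst Eneg x0 ω k)

end SignedOpinion

/-!
Under either assumption on `P` every node has weighted positive degree at most `1/2`, so
`λ_max(L⁺) ≤ 1` and the symmetric matrix `M` is positive semidefinite; it also fixes `𝟙`.
Hence `M - U = (I - U) M (I - U)` is positive semidefinite too, and `Mᵏ = (M - U)ᵏ + U` for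
`k ≥ 1`, where `U x⁰` is constant and drops out of coordinate differences.
If `λ_max(M - U) < 1`, the eigenvalues of `M - U` lie in `[0, 1)`, so `(M - U)ᵏ → 0`.
If `λ := λ_max(M - U) > 1`, an eigenvector `v` is orthogonal to `𝟙`, hence a left eigenvector of
`M`, so `⟨Mᵏ x⁰, v⟩ = λᵏ ⟨x⁰, v⟩` is unbounded, whereas `|⟨y, v⟩| ≤ (max_{i,j} |y_i - y_j|) ∑ |v_i|`
for `v ⊥ 𝟙`.
-/

open Topology

theorem add_pow_succ_of_mul_eq_zero {R : Type*} [Semiring R] {a b : R} (hab : a * b = 0)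
    (hba : b * a = 0) (hb : IsIdempotentElem b) (k : ℕ) : (a + b) ^ (k + 1) = a ^ (k + 1) + b := by
  induction k with
  | zero => simp
  | succ k ih =>
    rw [pow_succ, ih, add_mul, mul_add, mul_add, ← pow_succ, pow_succ a k, mul_assoc, hab, hba,
      hb.eq, mul_zero, add_zero, zero_add]

namespace Matrix

variable {ι : Type*} [Fintype ι]

theorem IsHermitian.tendsto_pow_atTop_nhds_zero {𝕜 : Type*} [RCLike 𝕜] [DecidableEq ι]
    {A : Matrix ι ι 𝕜} (hA : A.IsHermitian) (h : ∀ i, |hA.eigenvalues i| < 1) :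
    Tendsto (A ^ ·) atTop (𝓝 0) := by
  set u : Matrix ι ι 𝕜 := (hA.eigenvectorUnitary : Matrix ι ι 𝕜)
  have hpow (k : ℕ) : A ^ k = u * diagonal (fun i ↦ (hA.eigenvalues i : 𝕜) ^ k) * star u := by
    conv_lhs => rw [hA.spectral_theorem]
    rw [← map_pow, diagonal_pow, Unitary.conjStarAlgAut_apply]
    rfl
  have hdiag : Tendsto (fun k i ↦ (hA.eigenvalues i : 𝕜) ^ k) atTop (𝓝 0) :=
    tendsto_pi_nhds.2 fun i ↦ tendsto_pow_atTop_nhds_zero_of_norm_lt_one (by simpa using h i)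
  have hconj : Continuous fun d : ι → 𝕜 ↦ u * diagonal d * star u := by fun_prop
  simpa [hpow, Function.comp_def] using (hconj.tendsto 0).comp hdiag

theorem abs_dotProduct_le_of_sum_eq_zero {v y : ι → ℝ} (hv : ∑ i, v i = 0) {j : ι} {C : ℝ}
    (hy : ∀ i, |y i - y j| ≤ C) : |y ⬝ᵥ v| ≤ C * ∑ i, |v i| := by
  have hshift : y ⬝ᵥ v = ∑ i, (y i - y j) * v i := by
    simp only [sub_mul, Finset.sum_sub_distrib, ← Finset.mul_sum, hv, mul_zero, sub_zero]
    rfl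
  rw [hshift, Finset.mul_sum]
  refine (Finset.abs_sum_le_sum_abs _ _).trans (Finset.sum_le_sum fun i _ ↦ ?_)
  rw [abs_mul]
  exact mul_le_mul_of_nonneg_right (hy i) (abs_nonneg _)

theorem vecMul_pow_of_vecMul_eq [DecidableEq ι] {A : Matrix ι ι ℝ} {v : ι → ℝ} {t : ℝ}
    (hv : v ᵥ* A = t • v) (k : ℕ) : v ᵥ* A ^ k = t ^ k • v := by
  induction k with
  | zero => simp
  | succ k ih => rw [pow_succ, ← vecMul_vecMul, ih, smul_vecMul, hv, smul_smul, pow_succ]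

theorem exists_lt_abs_pow_mulVec_sub [DecidableEq ι] {A : Matrix ι ι ℝ} {v x : ι → ℝ} {t : ℝ}
    (hv : v ᵥ* A = t • v) (hsum : ∑ i, v i = 0) (hx : x ⬝ᵥ v ≠ 0) (ht : 1 < |t|) (C : ℝ) :
    ∃ k i j, C < |(A ^ k *ᵥ x) i - (A ^ k *ᵥ x) j| := by
  obtain ⟨j, -, -⟩ := Finset.exists_ne_zero_of_sum_ne_zero hx
  by_contra! hbdd
  have hgrow : Tendsto (fun k : ℕ ↦ |t| ^ k * |x ⬝ᵥ v|) atTop atTop :=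
    (tendsto_pow_atTop_atTop_of_one_lt ht).atTop_mul_const (abs_pos.2 hx)
  obtain ⟨k, hk⟩ := (hgrow.eventually_gt_atTop (C * ∑ i, |v i|)).exists
  have hpair : (A ^ k *ᵥ x) ⬝ᵥ v = t ^ k * (x ⬝ᵥ v) := by
    rw [dotProduct_comm, dotProduct_mulVec, vecMul_pow_of_vecMul_eq hv, smul_dotProduct,
      smul_eq_mul, dotProduct_comm]
  have hle := abs_dotProduct_le_of_sum_eq_zero hsum (hbdd k · j)
  rw [hpair, abs_mul, abs_pow] at hle
  exact hle.not_gt hk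

end Matrix

namespace SignedOpinion

open Finset

variable {n : ℕ}

theorem Umat_eq : Umat n = (n : ℝ)⁻¹ • vecMulVec 1 1 := by
  ext i j
  simp [Umat]

theorem Umat_mulVec (v : Fin n → ℝ) : Umat n *ᵥ v = fun _ ↦ (∑ i, v i) / n := by
  ext i
  simp [Umat, mulVec, dotProduct, mul_sum, div_eq_inv_mul]

theorem Umat_transpose : (Umat n)ᵀ = Umat n := by
  ext i j
  rfl

theorem mul_Umat_of_mulVec_one {A : Matrix (Fin n) (Fin n) ℝ} (hA : A *ᵥ 1 = 1) :
    A * Umat n = Umat n := by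
  rw [Umat_eq, mul_smul_comm, mul_vecMulVec, hA]

theorem Umat_mulVec_one : Umat n *ᵥ 1 = 1 := by
  ext i
  have : (n : ℝ) ≠ 0 := by exact_mod_cast i.pos.ne'
  simp [Umat_mulVec, this]

theorem Umat_mul_self : Umat n * Umat n = Umat n :=
  mul_Umat_of_mulVec_one Umat_mulVec_one

theorem sum_eq_zero_of_Umat_mulVec_eq_zero {v : Fin n → ℝ} (hv : Umat n *ᵥ v = 0) :
    ∑ i, v i = 0 := by
  rcases n.eq_zero_or_pos with rfl | hn
  · simp
  · have := congrFun hv ⟨0, hn⟩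
    simp only [Umat_mulVec, Pi.zero_apply, div_eq_zero_iff, Nat.cast_eq_zero] at this
    exact this.resolve_right hn.ne'

section MeanRemoved

variable {M : Matrix (Fin n) (Fin n) ℝ} (hM : M.IsSymm) (hMU : M * Umat n = Umat n)
include hM hMU

theorem Umat_mul_of_mul_Umat : Umat n * M = Umat n := by
  simpa [transpose_mul, Umat_transpose, hM.eq] using congrArg transpose hMU

theorem pow_succ_eq_sub_Umat_pow_succ_add (k : ℕ) :
    M ^ (k + 1) = (M - Umat n) ^ (k + 1) + Umat n := by
  have h := add_pow_succ_of_mul_eq_zero (a := M - Umat n) (b := Umat n)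
    (by rw [sub_mul, hMU, Umat_mul_self, sub_self])
    (by rw [mul_sub, Umat_mul_of_mul_Umat hM hMU, Umat_mul_self, sub_self]) Umat_mul_self k
  rwa [sub_add_cancel] at h

theorem Umat_mulVec_eq_zero_of_mulVec_eq {v : Fin n → ℝ} {t : ℝ}
    (hv : (M - Umat n) *ᵥ v = t • v) (ht : t ≠ 0) : Umat n *ᵥ v = 0 := by
  have h : Umat n *ᵥ ((M - Umat n) *ᵥ v) = 0 := by
    rw [mulVec_mulVec, mul_sub, Umat_mul_of_mul_Umat hM hMU, Umat_mul_self, sub_self, zero_mulVec]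
  rw [hv, mulVec_smul] at h
  exact (smul_eq_zero.1 h).resolve_left ht

end MeanRemoved

theorem le_lamMax {A : Matrix (Fin n) (Fin n) ℝ} {v : Fin n → ℝ} {t : ℝ} (hv : v ≠ 0)
    (h : A *ᵥ v = t • v) : t ≤ lamMax A := by
  refine le_csSup ((A.finite_spectrum.subset ?_).bddAbove) ⟨v, hv, h⟩
  rintro s ⟨w, hw, hs⟩
  rw [← spectrum_toLin']
  exact (Module.End.hasEigenvalue_of_hasEigenvector
    ⟨Module.End.mem_eigenspace_iff.2 (by simpa using hs), hw⟩).mem_spectrum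

theorem posSemidef_sub_Umat {M : Matrix (Fin n) (Fin n) ℝ} (hM : M.PosSemidef)
    (hMU : M * Umat n = Umat n) : (M - Umat n).PosSemidef := by
  have hUM := Umat_mul_of_mul_Umat (isHermitian_iff_isSymm.1 hM.1) hMU
  have hconj : M - Umat n = (1 - Umat n)ᴴ * M * (1 - Umat n) := by
    simp only [conjTranspose_eq_transpose_of_trivial, transpose_sub, transpose_one,
      Umat_transpose, sub_mul, mul_sub, one_mul, mul_one, hMU, hUM, Umat_mul_self]
    abel
  rw [hconj]
  exact hM.conjTranspose_mul_mul_same _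

theorem tendsto_pow_mulVec_sub_of_lamMax_lt_one {M : Matrix (Fin n) (Fin n) ℝ}
    (hM : M.PosSemidef) (hMU : M * Umat n = Umat n) (hlt : lamMax (M - Umat n) < 1)
    (x : Fin n → ℝ) (i j : Fin n) :
    Tendsto (fun k ↦ (M ^ k *ᵥ x) i - (M ^ k *ᵥ x) j) atTop (𝓝 0) := by
  have hN := posSemidef_sub_Umat hM hMU
  have heig (l : Fin n) : |hN.1.eigenvalues l| < 1 := by
    have hne : (⇑(hN.1.eigenvectorBasis l) : Fin n → ℝ) ≠ 0 := fun h ↦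
      hN.1.eigenvectorBasis.orthonormal.ne_zero l (by ext m; exact congrFun h m)
    exact abs_lt.2 ⟨by linarith [hN.eigenvalues_nonneg l],
      (le_lamMax hne (hN.1.mulVec_eigenvectorBasis l)).trans_lt hlt⟩
  have hvec : Tendsto (fun k ↦ (M - Umat n) ^ (k + 1) *ᵥ x) atTop (𝓝 0) := by
    simpa [Function.comp_def] using ((continuous_id.matrix_mulVec continuous_const).tendsto 0).comp
      ((hN.1.tendsto_pow_atTop_nhds_zero heig).comp (tendsto_add_atTop_nat 1))
  rw [← tendsto_add_atTop_iff_nat 1]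
  simpa [pow_succ_eq_sub_Umat_pow_succ_add (isHermitian_iff_isSymm.1 hM.1) hMU, add_mulVec, Umat_mulVec] using
    (tendsto_pi_nhds.1 hvec i).sub (tendsto_pi_nhds.1 hvec j)

theorem exists_lt_abs_pow_mulVec_sub_of_one_lt_lamMax {M : Matrix (Fin n) (Fin n) ℝ}
    (hM : M.IsSymm) (hMU : M * Umat n = Umat n) (hgt : 1 < lamMax (M - Umat n))
    (x : Fin n → ℝ)
    (hx : ∃ v : Fin n → ℝ, (M - Umat n) *ᵥ v = lamMax (M - Umat n) • v ∧
      ((1 - Umat n) *ᵥ x) ⬝ᵥ v ≠ 0) (C : ℝ) :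
    ∃ k i j, C < |(M ^ k *ᵥ x) i - (M ^ k *ᵥ x) j| := by
  obtain ⟨v, hv, hxv⟩ := hx
  have hUv := Umat_mulVec_eq_zero_of_mulVec_eq hM hMU hv (by linarith)
  have hleft : v ᵥ* M = lamMax (M - Umat n) • v := by
    rw [← mulVec_transpose, hM.eq, ← hv, sub_mulVec, hUv, sub_zero]
  have hxv' : x ⬝ᵥ v ≠ 0 := by
    rwa [dotProduct_comm, dotProduct_mulVec, ← mulVec_transpose, transpose_sub, transpose_one,
      Umat_transpose, sub_mulVec, hUv, one_mulVec, sub_zero, dotProduct_comm] at hxv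
  exact exists_lt_abs_pow_mulVec_sub hleft (sum_eq_zero_of_Umat_mulVec_eq_zero hUv) hxv'
    (by rw [abs_of_pos (by linarith)]; exact hgt) C

theorem esub_dotProduct (i j : Fin n) (v : Fin n → ℝ) : esub i j ⬝ᵥ v = v i - v j := by
  simp [esub, dotProduct, sub_mul, sum_sub_distrib]

theorem dmat_mk (i j : Fin n) : dmat s(i, j) = vecMulVec (esub i j) (esub i j) := rfl

theorem dmat_mulVec (i j : Fin n) (v : Fin n → ℝ) :
    dmat s(i, j) *ᵥ v = (v i - v j) • esub i j := by
  rw [dmat_mk, vecMulVec_mulVec, esub_dotProduct, op_smul_eq_smul]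

theorem dotProduct_dmat_mulVec (i j : Fin n) (v : Fin n → ℝ) :
    v ⬝ᵥ (dmat s(i, j) *ᵥ v) = (v i - v j) ^ 2 := by
  rw [dmat_mulVec, dotProduct_smul, dotProduct_comm, esub_dotProduct, smul_eq_mul, sq]

theorem dmat_transpose (e : Sym2 (Fin n)) : (dmat e)ᵀ = dmat e := by
  induction e using Sym2.ind with
  | _ i j => rw [dmat_mk, transpose_vecMulVec]

theorem dmat_mulVec_one (e : Sym2 (Fin n)) : dmat e *ᵥ 1 = 0 := by
  induction e using Sym2.ind with
  | _ i j => simp [dmat_mulVec]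

theorem lap_transpose (P : Matrix (Fin n) (Fin n) ℝ) (Es : Finset (Sym2 (Fin n))) :
    (lap P Es)ᵀ = lap P Es := by
  simp [lap, transpose_sum, dmat_transpose]

theorem lap_mulVec_one (P : Matrix (Fin n) (Fin n) ℝ) (Es : Finset (Sym2 (Fin n))) :
    lap P Es *ᵥ 1 = 0 := by
  simp [lap, sum_mulVec, smul_mulVec, dmat_mulVec_one]

theorem dotProduct_lap_mulVec (P : Matrix (Fin n) (Fin n) ℝ) (Es : Finset (Sym2 (Fin n)))
    (v : Fin n → ℝ) :
    v ⬝ᵥ (lap P Es *ᵥ v) = ∑ e ∈ Es, edgeWeight P e * (v ⬝ᵥ (dmat e *ᵥ v)) := by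
  simp [lap, sum_mulVec, smul_mulVec, dotProduct_sum, dotProduct_smul]

theorem edgeWeight_nonneg {P : Matrix (Fin n) (Fin n) ℝ} (hP : ∀ i j, 0 ≤ P i j)
    (e : Sym2 (Fin n)) : 0 ≤ edgeWeight P e := by
  induction e using Sym2.ind with
  | _ i j =>
    exact div_nonneg (add_nonneg (hP i j) (hP j i)) n.cast_nonneg

theorem dotProduct_lap_mulVec_nonneg {P : Matrix (Fin n) (Fin n) ℝ} (hP : ∀ i j, 0 ≤ P i j)
    (Es : Finset (Sym2 (Fin n))) (v : Fin n → ℝ) : 0 ≤ v ⬝ᵥ (lap P Es *ᵥ v) := by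
  rw [dotProduct_lap_mulVec]
  refine sum_nonneg fun e _ ↦ mul_nonneg (edgeWeight_nonneg hP e) ?_
  induction e using Sym2.ind with
  | _ i j => rw [dotProduct_dmat_mulVec]; positivity

def weightedDegree (P : Matrix (Fin n) (Fin n) ℝ) (Es : Finset (Sym2 (Fin n))) (k : Fin n) : ℝ :=
  ∑ e ∈ Es with k ∈ e, edgeWeight P e

theorem dotProduct_dmat_mulVec_le {e : Sym2 (Fin n)} (he : ¬ e.IsDiag) (v : Fin n → ℝ) :
    v ⬝ᵥ (dmat e *ᵥ v) ≤ 2 * ∑ k with k ∈ e, v k ^ 2 := by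
  induction e using Sym2.ind with
  | _ i j =>
    have hij : i ≠ j := by simpa using he
    have hends : ({k | k ∈ s(i, j)} : Finset (Fin n)) = {i, j} := by ext; simp
    rw [dotProduct_dmat_mulVec, hends, sum_pair hij]
    nlinarith [sq_nonneg (v i + v j)]

theorem dotProduct_lap_mulVec_le_weightedDegree {P : Matrix (Fin n) (Fin n) ℝ} (hP : ∀ i j, 0 ≤ P i j)
    {Es : Finset (Sym2 (Fin n))} (hloop : ∀ e ∈ Es, ¬ e.IsDiag) (v : Fin n → ℝ) :
    v ⬝ᵥ (lap P Es *ᵥ v) ≤ 2 * ∑ k, weightedDegree P Es k * v k ^ 2 := by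
  calc v ⬝ᵥ (lap P Es *ᵥ v)
      ≤ ∑ e ∈ Es, edgeWeight P e * (2 * ∑ k with k ∈ e, v k ^ 2) := by
        rw [dotProduct_lap_mulVec]
        exact sum_le_sum fun e he ↦
          mul_le_mul_of_nonneg_left (dotProduct_dmat_mulVec_le (hloop e he) v)
            (edgeWeight_nonneg hP e)
    _ = 2 * ∑ e ∈ Es, ∑ k with k ∈ e, edgeWeight P e * v k ^ 2 := by
        simp only [mul_sum, mul_left_comm]
    _ = 2 * ∑ k, weightedDegree P Es k * v k ^ 2 := by
        rw [sum_comm' (t' := univ) (s' := fun k ↦ {e ∈ Es | k ∈ e}) (by simp)]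
        simp [weightedDegree, sum_mul]

theorem weightedDegree_le {P : Matrix (Fin n) (Fin n) ℝ} (hP : ∀ i j, 0 ≤ P i j)
    {Es : Finset (Sym2 (Fin n))} (hloop : ∀ e ∈ Es, ¬ e.IsDiag) (k : Fin n) :
    weightedDegree P Es k ≤ (∑ j ∈ univ.erase k, (P k j + P j k)) / n := by
  have hsub : {e ∈ Es | k ∈ e} ⊆ (univ.erase k).image (s(k, ·)) := by
    intro e he
    obtain ⟨he, hke⟩ := mem_filter.1 he
    obtain ⟨j, rfl⟩ := Sym2.mem_iff_exists.1 hke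
    have hjk : j ≠ k := fun h ↦ hloop _ he (by simp [h])
    exact mem_image.2 ⟨j, mem_erase.2 ⟨hjk, mem_univ j⟩, rfl⟩
  calc weightedDegree P Es k
      ≤ ∑ e ∈ (univ.erase k).image (s(k, ·)), edgeWeight P e :=
        sum_le_sum_of_subset_of_nonneg hsub fun e _ _ ↦ edgeWeight_nonneg hP e
    _ = (∑ j ∈ univ.erase k, (P k j + P j k)) / n := by
        rw [sum_image fun _ _ _ _ h ↦ Sym2.congr_right.1 h, sum_div]
        rfl

theorem RowStochastic.apply_add_apply_le_one {P : Matrix (Fin n) (Fin n) ℝ}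
    (hP : RowStochastic P) {i j : Fin n} (hij : i ≠ j) : P i j + P i i ≤ 1 := by
  rw [← sum_pair hij.symm, ← hP.2 i]
  exact sum_le_sum_of_subset_of_nonneg (subset_univ _) fun l _ _ ↦ hP.1 i l

def expectedUpdate (P : Matrix (Fin n) (Fin n) ℝ) (Epst Eneg : Finset (Sym2 (Fin n)))
    (α β : ℝ) : Matrix (Fin n) (Fin n) ℝ :=
  1 - α • lap P Epst + β • lap P Eneg

theorem expectedUpdate_mul_Umat (P : Matrix (Fin n) (Fin n) ℝ)
    (Epst Eneg : Finset (Sym2 (Fin n))) (α β : ℝ) :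
    expectedUpdate P Epst Eneg α β * Umat n = Umat n :=
  mul_Umat_of_mulVec_one <| by
    simp [expectedUpdate, add_mulVec, sub_mulVec, smul_mulVec, lap_mulVec_one]

section DegreeCondition

variable {P : Matrix (Fin n) (Fin n) ℝ} (hP : RowStochastic P)
    (hassum : (∀ i, (1 : ℝ) / 2 ≤ P i i) ∨ ((∀ j, ∑ i, P i j = 1) ∧ 4 ≤ n))
include hP hassum

theorem sum_erase_add_le_half (k : Fin n) :
    ∑ j ∈ univ.erase k, (P k j + P j k) ≤ n / 2 := by
  have hrow : ∑ j ∈ univ.erase k, P k j = 1 - P k k := by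
    rw [sum_erase_eq_sub (mem_univ k), hP.2 k]
  rw [sum_add_distrib, hrow]
  rcases hassum with hdiag | ⟨hcol, hn⟩
  · have hcol : ∑ j ∈ univ.erase k, P j k ≤ ∑ j ∈ univ.erase k, (1 / 2 : ℝ) :=
      sum_le_sum fun j hj ↦ by
        linarith [hP.apply_add_apply_le_one (ne_of_mem_erase hj), hdiag j]
    have hconst : ∑ j ∈ univ.erase k, (1 / 2 : ℝ) = n / 2 - 1 / 2 := by
      rw [sum_erase_eq_sub (mem_univ k)]
      simp [div_eq_mul_inv]
    linarith [hdiag k]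
  · have hcol : ∑ j ∈ univ.erase k, P j k = 1 - P k k := by
      rw [sum_erase_eq_sub (mem_univ k), hcol k]
    have : (4 : ℝ) ≤ n := by exact_mod_cast hn
    linarith [hP.1 k k]

theorem weightedDegree_le_half {Es : Finset (Sym2 (Fin n))} (hloop : ∀ e ∈ Es, ¬ e.IsDiag) (k : Fin n) :
    weightedDegree P Es k ≤ 1 / 2 := by
  have hn : (0 : ℝ) < n := by exact_mod_cast k.pos
  calc weightedDegree P Es k ≤ (∑ j ∈ univ.erase k, (P k j + P j k)) / n :=
        weightedDegree_le hP.1 hloop k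
    _ ≤ (n / 2) / n := by gcongr; exact sum_erase_add_le_half hP hassum k
    _ = 1 / 2 := by field_simp

theorem dotProduct_lap_mulVec_le_dotProduct {Es : Finset (Sym2 (Fin n))} (hloop : ∀ e ∈ Es, ¬ e.IsDiag) (v : Fin n → ℝ) :
    v ⬝ᵥ (lap P Es *ᵥ v) ≤ v ⬝ᵥ v := by
  calc v ⬝ᵥ (lap P Es *ᵥ v) ≤ 2 * ∑ k, weightedDegree P Es k * v k ^ 2 :=
        dotProduct_lap_mulVec_le_weightedDegree hP.1 hloop v
    _ ≤ 2 * ∑ k, 1 / 2 * v k ^ 2 := by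
        gcongr with k
        exact weightedDegree_le_half hP hassum hloop k
    _ = v ⬝ᵥ v := by simp [dotProduct, mul_sum, sq]

theorem expectedUpdate_posSemidef {Epst : Finset (Sym2 (Fin n))} (hloop : ∀ e ∈ Epst, ¬ e.IsDiag)
    (Eneg : Finset (Sym2 (Fin n))) {α β : ℝ} (hα1 : α ≤ 1) (hβ : 0 ≤ β) :
    (expectedUpdate P Epst Eneg α β).PosSemidef := by
  refine .of_dotProduct_mulVec_nonneg ?_ fun v ↦ ?_
  · simp [isHermitian_iff_isSymm, IsSymm, expectedUpdate, lap_transpose]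
  · have hpos := dotProduct_lap_mulVec_le_dotProduct hP hassum hloop v
    have hpos0 := dotProduct_lap_mulVec_nonneg hP.1 Epst v
    have hneg0 := dotProduct_lap_mulVec_nonneg hP.1 Eneg v
    simp only [star_trivial, expectedUpdate, add_mulVec, sub_mulVec, one_mulVec, smul_mulVec,
      dotProduct_add, dotProduct_sub, dotProduct_smul, smul_eq_mul]
    nlinarith [mul_le_mul_of_nonneg_right hα1 hpos0, mul_nonneg hβ hneg0]

end DegreeCondition

theorem mean_convergence_and_divergence_general
    (n : ℕ)
    (Epst Eneg : Finset (Sym2 (Fin n)))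
    (hloop : ∀ e ∈ Epst ∪ Eneg, ¬ e.IsDiag)
    (P : Matrix (Fin n) (Fin n) ℝ)
    (hP : RowStochastic P)
    (α β : ℝ) (hα1 : α ≤ 1) (hβ : 0 ≤ β)
    (hassum : (∀ i, (1 : ℝ) / 2 ≤ P i i) ∨ ((∀ j, ∑ i, P i j = 1) ∧ 4 ≤ n))
    (M : Matrix (Fin n) (Fin n) ℝ)
    (hM : M = 1 - α • lap P Epst + β • lap P Eneg) :
    (lamMax (M - Umat n) < 1 →
      ∀ (x0 : Fin n → ℝ) (i j : Fin n),
        Tendsto (fun k : ℕ => (M ^ k *ᵥ x0) i - (M ^ k *ᵥ x0) j) atTop (nhds 0)) ∧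
    (1 < lamMax (M - Umat n) →
      ∀ x0 : Fin n → ℝ,
        (∃ v : Fin n → ℝ, (M - Umat n) *ᵥ v = lamMax (M - Umat n) • v ∧
          dotProduct ((1 - Umat n) *ᵥ x0) v ≠ 0) →
        ∀ C : ℝ, ∃ k : ℕ, ∃ i j : Fin n, C < |(M ^ k *ᵥ x0) i - (M ^ k *ᵥ x0) j|) := by
  change M = expectedUpdate P Epst Eneg α β at hM
  have hpsd : M.PosSemidef := hM ▸ expectedUpdate_posSemidef hP hassum
    (fun e he ↦ hloop e (mem_union_left _ he)) Eneg hα1 hβ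
  have hMU : M * Umat n = Umat n := hM ▸ expectedUpdate_mul_Umat P Epst Eneg α β
  exact ⟨tendsto_pow_mulVec_sub_of_lamMax_lt_one hpsd hMU,
    exists_lt_abs_pow_mulVec_sub_of_one_lt_lamMax (isHermitian_iff_isSymm.1 hpsd.1) hMU⟩

theorem mean_convergence_and_divergence
    (n : ℕ) (hn : 3 ≤ n)
    (Epst Eneg : Finset (Sym2 (Fin n)))
    (hdisj : Disjoint Epst Eneg)
    (hloop : ∀ e ∈ Epst ∪ Eneg, ¬ e.IsDiag)
    (P : Matrix (Fin n) (Fin n) ℝ)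
    (hP : RowStochastic P)
    (hPc : Complies P (Epst ∪ Eneg))
    (hconn : (graphOf (Epst ∪ Eneg)).Connected)
    (hneg : Eneg.Nonempty)
    (α β : ℝ) (hα0 : 0 ≤ α) (hα1 : α ≤ 1) (hβ : 0 ≤ β)
    (hassum : (∀ i, (1 : ℝ) / 2 ≤ P i i) ∨ ((∀ j, ∑ i, P i j = 1) ∧ 4 ≤ n))
    (M : Matrix (Fin n) (Fin n) ℝ)
    (hM : M = 1 - α • lap P Epst + β • lap P Eneg) :
    (lamMax (M - Umat n) < 1 →
      ∀ (x0 : Fin n → ℝ) (i j : Fin n),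
        Tendsto (fun k : ℕ => (M ^ k *ᵥ x0) i - (M ^ k *ᵥ x0) j) atTop (nhds 0)) ∧
    (1 < lamMax (M - Umat n) →
      ∀ x0 : Fin n → ℝ,
        (∃ v : Fin n → ℝ, (M - Umat n) *ᵥ v = lamMax (M - Umat n) • v ∧
          dotProduct ((1 - Umat n) *ᵥ x0) v ≠ 0) →
        ∀ C : ℝ, ∃ k : ℕ, ∃ i j : Fin n, C < |(M ^ k *ᵥ x0) i - (M ^ k *ᵥ x0) j|) :=
  mean_convergence_and_divergence_general n Epst Eneg hloop P hP α β hα1 hβ hassum M hM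

end SignedOpinion
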